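/- Let p > 2 and c > 0. There exists a constant κ > 0 (one may take κ = (c·(p−2)^{p−1}/(p−1)^{p−1})^{1/(p−2)}) such that the function u(x, t) := κ·((1 − x + c·t)₊)^{(p−1)/(p−2)} on ℝ × ℝ satisfies the one-dimensional parabolic p-Laplace equation ∂_t u(x, t) = ∂_x(|∂_x u(x, t)|^{p−2}·∂_x u(x, t)) pointwise at every (x, t) ∈ ℝ² with 1 − x + c·t ≠ 0. In particular u is a nonnegative, nonconstant function defined on all of ℝ × ℝ. -/

import Mathlib

/-!
Write `ξ = 1 - x + c t`, `α = (p - 1)/(p - 2)` and `u = κ ξ₊^α`. Away from `ξ = 0`,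
`u_t = c κ α ξ₊^(α-1)` and `u_x = -κ α ξ₊^(α-1)`; since `(α - 1)(p - 1) = α`, the flux is
`|u_x|^(p-2) u_x = -(κ α)^(p-1) ξ₊^α`, whose `x`-derivative is `(κ α)^(p-1) α ξ₊^(α-1)`.
The equation thus reduces to `(κ α)^(p-1) = κ c`, i.e. `κ^(p-2) = c / α^(p-1)`, which is how
`κ` is chosen.
-/

open Real Filter Topology

theorem hasDerivAt_max_zero_rpow {α s : ℝ} (hα : α ≠ 1) (hs : s ≠ 0) :
    HasDerivAt (fun s : ℝ => max s 0 ^ α) (α * max s 0 ^ (α - 1)) s := by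
  rcases hs.lt_or_gt with hneg | hpos
  · have hev : (fun s : ℝ => max s 0 ^ α) =ᶠ[𝓝 s] fun _ => (0 : ℝ) ^ α := by
      filter_upwards [gt_mem_nhds hneg] with y hy
      rw [max_eq_right hy.le]
    rw [max_eq_right hneg.le, zero_rpow (sub_ne_zero.mpr hα), mul_zero]
    exact (hasDerivAt_const s _).congr_of_eventuallyEq hev
  · have hev : (fun s : ℝ => max s 0 ^ α) =ᶠ[𝓝 s] fun s => s ^ α := by
      filter_upwards [lt_mem_nhds hpos] with y hy
      rw [max_eq_left hy.le]
    rw [max_eq_left hpos.le]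
    exact (hasDerivAt_rpow_const (Or.inl hpos.ne')).congr_of_eventuallyEq hev

theorem HasDerivAt.const_mul_max_zero_rpow {l : ℝ → ℝ} {m y : ℝ} (κ : ℝ) {α : ℝ}
    (hl : HasDerivAt l m y) (hα : α ≠ 1) (hly : l y ≠ 0) :
    HasDerivAt (fun y => κ * max (l y) 0 ^ α) (κ * (α * max (l y) 0 ^ (α - 1)) * m) y :=
  (((hasDerivAt_max_zero_rpow hα hly).comp y hl).const_mul κ).congr_deriv (by ring)

theorem abs_neg_rpow_mul_neg {a : ℝ} (r : ℝ) (ha : 0 ≤ a) (hr : r + 1 ≠ 0) :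
    |-a| ^ r * -a = -(a ^ (r + 1)) := by
  rw [abs_neg, abs_of_nonneg ha, rpow_add_one' ha hr, mul_neg]

theorem traveling_wave_solves_p_laplace {p c κ α : ℝ} (hκ : 0 ≤ κ) (hα : 0 ≤ α) (hα1 : α ≠ 1)
    (hp : p ≠ 1) (hexp : (α - 1) * (p - 1) = α) (hamp : (κ * α) ^ (p - 1) = κ * c)
    (x t : ℝ) (hξ : 1 - x + c * t ≠ 0) :
    deriv (fun s : ℝ => κ * max (1 - x + c * s) 0 ^ α) t =
      deriv (fun y : ℝ =>
        |deriv (fun z : ℝ => κ * max (1 - z + c * t) 0 ^ α) y| ^ (p - 2) *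
          deriv (fun z : ℝ => κ * max (1 - z + c * t) 0 ^ α) y) x := by
  have hξ_t : HasDerivAt (fun s : ℝ => 1 - x + c * s) c t := by
    simpa using ((hasDerivAt_id t).const_mul c).const_add (1 - x)
  have hξ_x : ∀ y, HasDerivAt (fun z : ℝ => 1 - z + c * t) (-1) y := fun y => by
    simpa using ((hasDerivAt_id y).const_sub 1).add_const (c * t)
  have hu_t := hξ_t.const_mul_max_zero_rpow κ hα1 hξ
  have hflux : (fun y : ℝ =>
      |deriv (fun z : ℝ => κ * max (1 - z + c * t) 0 ^ α) y| ^ (p - 2) *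
        deriv (fun z : ℝ => κ * max (1 - z + c * t) 0 ^ α) y) =ᶠ[𝓝 x]
      fun y => -(κ * α) ^ (p - 1) * max (1 - y + c * t) 0 ^ α := by
    have hopen : IsOpen {y : ℝ | 1 - y + c * t ≠ 0} := isOpen_ne_fun (by fun_prop) continuous_const
    filter_upwards [hopen.mem_nhds hξ] with y hy
    set M := max (1 - y + c * t) 0
    have hM : 0 ≤ M := le_max_right _ _
    rw [((hξ_x y).const_mul_max_zero_rpow κ hα1 hy).deriv, mul_neg_one,
      abs_neg_rpow_mul_neg _ (by positivity) (by contrapose! hp; linarith),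
      show p - 2 + 1 = p - 1 by ring, ← mul_assoc,
      mul_rpow (by positivity) (rpow_nonneg hM _), ← rpow_mul hM, hexp, neg_mul]
  rw [hu_t.deriv, hflux.deriv_eq, ((hξ_x x).const_mul_max_zero_rpow _ hα1 hξ).deriv, hamp]
  ring

theorem traveling_wave_amplitude {p c : ℝ} (hp : 2 < p) (hc : 0 < c) :
    let κ := (c * (p - 2) ^ (p - 1) / (p - 1) ^ (p - 1)) ^ ((1 : ℝ) / (p - 2))
    0 < κ ∧ (κ * ((p - 1) / (p - 2))) ^ (p - 1) = κ * c := by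
  intro κ
  have hp2 : 0 < p - 2 := by linarith
  have hp1 : 0 < p - 1 := by linarith
  have hB : 0 < c * (p - 2) ^ (p - 1) / (p - 1) ^ (p - 1) := by positivity
  have hκ : 0 < κ := rpow_pos_of_pos hB _
  have hκp : κ ^ (p - 2) = c * (p - 2) ^ (p - 1) / (p - 1) ^ (p - 1) := by
    rw [← rpow_mul hB.le, one_div, inv_mul_cancel₀ hp2.ne', rpow_one]
  refine ⟨hκ, ?_⟩
  have hq : p - 1 = p - 2 + 1 := by ring
  rw [mul_rpow hκ.le (by positivity), div_rpow hp1.le hp2.le, hq,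
    rpow_add_one' hκ.le (by linarith), ← hq, hκp]
  field_simp

theorem traveling_wave_p_laplace (p c : ℝ) (hp : 2 < p) (hc : 0 < c) :
    ∃ κ : ℝ,
      κ = (c * (p - 2) ^ (p - 1) / (p - 1) ^ (p - 1)) ^ ((1 : ℝ) / (p - 2)) ∧
      0 < κ ∧
      (∀ x t : ℝ, 1 - x + c * t ≠ 0 →
        deriv (fun s : ℝ => κ * max (1 - x + c * s) 0 ^ ((p - 1) / (p - 2))) t =
          deriv (fun y : ℝ =>
            |deriv (fun z : ℝ => κ * max (1 - z + c * t) 0 ^ ((p - 1) / (p - 2))) y| ^ (p - 2) *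
              deriv (fun z : ℝ => κ * max (1 - z + c * t) 0 ^ ((p - 1) / (p - 2))) y) x) ∧
      (∀ x t : ℝ, 0 ≤ κ * max (1 - x + c * t) 0 ^ ((p - 1) / (p - 2))) ∧
      (∃ x t x' t' : ℝ,
        κ * max (1 - x + c * t) 0 ^ ((p - 1) / (p - 2)) ≠
          κ * max (1 - x' + c * t') 0 ^ ((p - 1) / (p - 2))) := by
  have hp2 : 0 < p - 2 := by linarith
  have hα : 0 < (p - 1) / (p - 2) := div_pos (by linarith) hp2
  have hα1 : (p - 1) / (p - 2) ≠ 1 := by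
    rw [Ne, div_eq_one_iff_eq hp2.ne']; linarith
  have hexp : ((p - 1) / (p - 2) - 1) * (p - 1) = (p - 1) / (p - 2) := by
    field_simp; ring
  obtain ⟨hκ, hamp⟩ := traveling_wave_amplitude hp hc
  refine ⟨_, rfl, hκ, traveling_wave_solves_p_laplace hκ.le hα.le hα1 (by linarith) hexp hamp,
    fun x t => by positivity, 0, 0, 2, 0, ?_⟩
  norm_num [zero_rpow hα.ne']
  simpa using hκ.ne'
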